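/- arXiv:1012.2955 — 4 statements merged into one kernel-verified Lean document; each statement's English description precedes it below -/
import Mathlib

section
/- For a skew-symmetric matrix A of even size 2n over a commutative ring, the square of the Pfaffian of A equals the determinant of A. -/
/-!
Write `pfaffianSum A` for the sum over all permutations in the statement; it is `2ⁿ n!` times the
Pfaffian. As a function of the rows of `B`, `pfaffianSum (B * A * Bᵀ)` is alternating multilinear,
so it equals `det B * pfaffianSum A`. Over a field, Schur complements with respect to a nonzero
entry show that every alternating matrix is congruent to a block diagonal matrix with blocks
`!![0, aᵢ; -aᵢ, 0]`. For such a matrix the nonzero terms of `pfaffianSum` are indexed by the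
hyperoctahedral group `Sₙ ⋉ (S₂)ⁿ` and all equal `∏ aᵢ`, while the determinant is `(∏ aᵢ)²`.
Hence `pfaffianSum A ^ 2 = (2ⁿ n!)² det A` over fields, then over domains, then for the generic
alternating matrix `X - Xᵀ` over `ℤ[Xᵢⱼ]`, and by specialization over every commutative ring.
-/

open Equiv Finset
open scoped Kronecker

namespace Equiv

theorem exists_equiv_extending_pair {γ β : Type*} (s : Fin 2 ⊕ γ ≃ β) {x y : β}
    (hxy : x ≠ y) : ∃ t : Fin 2 ⊕ γ ≃ β, t (.inl 0) = x ∧ t (.inl 1) = y := by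
  obtain ⟨g, hg⟩ := Perm.exists_extending_pair (fun r => s (.inl r)) (![x, y] : Fin 2 → β)
    (fun r r' h => by simpa using h)
    (by intro r r' h; fin_cases r <;> fin_cases r' <;> simp_all [eq_comm])
  exact ⟨s.trans g, hg 0, hg 1⟩

namespace Perm

theorem sign_prodShear {ι : Type*} [Fintype ι] [DecidableEq ι] (π : Perm ι)
    (g : ι → Perm (Fin 2)) :
    sign (prodShear π g) = ∏ i, sign (g i) := by
  have h : prodShear π g = prodCongrLeft (fun _ => π) * prodCongrRight g := rfl
  rw [h, sign_mul, sign_prodCongrLeft, sign_prodCongrRight, Fin.prod_univ_two,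
    Int.units_mul_self, one_mul]

theorem prodShear_injective {ι : Type*} :
    Function.Injective fun p : Perm ι × (ι → Perm (Fin 2)) =>
      (prodShear p.1 p.2 : Perm (ι × Fin 2)) := by
  rintro ⟨π, g⟩ ⟨π', g'⟩ h
  have h' := fun i r => congr($h (i, r))
  simp only [prodShear_apply, Prod.mk.injEq] at h'
  exact Prod.ext (Equiv.ext fun i => (h' i 0).1) (funext fun i => Equiv.ext fun r => (h' i r).2)

theorem exists_prodShear_eq {ι : Type*} [Finite ι] (σ : Perm (ι × Fin 2))
    (hσ : ∀ i, (σ (i, 0)).1 = (σ (i, 1)).1 ∧ (σ (i, 0)).2 ≠ (σ (i, 1)).2) :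
    ∃ (π : Perm ι) (g : ι → Perm (Fin 2)), prodShear π g = σ := by
  have fin_two_pigeonhole : ∀ a b c : Fin 2, a ≠ b → c ≠ a → c ≠ b → False := by decide
  have hπ : Function.Injective fun i => (σ (i, 0)).1 := by
    intro i j hij
    by_contra hne
    refine fin_two_pigeonhole _ _ (σ (j, 0)).2 (hσ i).2 (fun h => hne ?_) (fun h => ?_)
    · exact congr_arg Prod.fst (σ.injective (Prod.ext hij h.symm))
    · simpa using σ.injective (Prod.ext (hij.symm.trans (hσ i).1) h)
  have hg : ∀ i, Function.Injective fun r : Fin 2 => (σ (i, r)).2 := by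
    intro i
    simp only [Function.Injective, Fin.forall_fin_two, (hσ i).2, (hσ i).2.symm]
    simp
  refine ⟨.ofBijective _ (Finite.injective_iff_bijective.mp hπ),
    fun i => .ofBijective _ (Finite.injective_iff_bijective.mp (hg i)), ?_⟩
  ext ⟨i, r⟩ : 1
  fin_cases r
  exacts [rfl, Prod.ext (hσ i).1 rfl]

end Perm

end Equiv

namespace Matrix

variable {R : Type*} [CommRing R] {ι m n : Type*}

section PfaffianSum

variable [Fintype ι] [DecidableEq ι]

-- The pairs `{2i, 2i + 1}` of the statement become `{(i, 0), (i, 1)}`.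
def pfaffianSum (A : Matrix (ι × Fin 2) (ι × Fin 2) R) : R :=
  ∑ σ : Perm (ι × Fin 2), (Perm.sign σ : R) * ∏ i, A (σ (i, 0)) (σ (i, 1))

theorem pfaffianSum_map {S : Type*} [CommRing S] (f : R →+* S)
    (A : Matrix (ι × Fin 2) (ι × Fin 2) R) :
    pfaffianSum (A.map f) = f (pfaffianSum A) := by
  simp [pfaffianSum, map_sum, map_prod]

theorem sum_perm_sign_mul_prod_eq_pfaffianSum_submatrix [Fintype m] [DecidableEq m]
    (e : ι × Fin 2 ≃ m) (A : Matrix m m R) :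
    ∑ σ : Perm m, (Perm.sign σ : R) * ∏ i, A (σ (e (i, 0))) (σ (e (i, 1))) =
      pfaffianSum (A.submatrix e e) := by
  rw [pfaffianSum, ← e.permCongr.sum_comp]
  simp [Perm.sign_permCongr, permCongr_apply]

end PfaffianSum

theorem mul_mul_transpose_apply [Fintype m] (A : Matrix m m R) (B : Matrix n m R) (x y : n) :
    (B * A * Bᵀ) x y = B x ⬝ᵥ A *ᵥ B y := by
  simp only [mul_apply, dotProduct, mulVec, Finset.mul_sum, Finset.sum_mul, transpose_apply,
    mul_assoc]
  exact Finset.sum_comm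

section Congruence

variable [Fintype m] [DecidableEq m]

def toMultilinearMapFinTwo (A : Matrix m m R) : MultilinearMap R (fun _ : Fin 2 => m → R) R :=
  LinearMap.uncurryLeft <|
    (MultilinearMap.ofSubsingletonₗ R R (ι := Fin 1) (m → R) R 0).toLinearMap ∘ₗ
      toLinearMap₂' R A

theorem toMultilinearMapFinTwo_apply (A : Matrix m m R) (v : Fin 2 → m → R) :
    toMultilinearMapFinTwo A v = v 0 ⬝ᵥ A *ᵥ v 1 := by
  simp [toMultilinearMapFinTwo, toLinearMap₂'_apply', Fin.tail]

variable [Fintype ι] [DecidableEq ι]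

def pfaffianAlternatingMap (A : Matrix m m R) : (m → R) [⋀^(ι × Fin 2)]→ₗ[R] R :=
  MultilinearMap.alternatization <|
    ((MultilinearMap.mkPiAlgebra R ι R).compMultilinearMap
      fun _ => toMultilinearMapFinTwo A).domDomCongr (sigmaEquivProd ι (Fin 2))

theorem pfaffianAlternatingMap_apply (A : Matrix m m R) (B : Matrix (ι × Fin 2) m R) :
    pfaffianAlternatingMap A (fun x => B x) = pfaffianSum (B * A * Bᵀ) := by
  rw [pfaffianAlternatingMap, MultilinearMap.alternatization_apply, pfaffianSum]
  refine Finset.sum_congr rfl fun σ _ => ?_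
  simp only [Units.smul_def, MultilinearMap.domDomCongr_apply,
    MultilinearMap.compMultilinearMap_apply, MultilinearMap.mkPiAlgebra_apply,
    toMultilinearMapFinTwo_apply, mul_mul_transpose_apply, zsmul_eq_mul]
  rfl

theorem pfaffianSum_mul_mul_transpose (A B : Matrix (ι × Fin 2) (ι × Fin 2) R) :
    pfaffianSum (B * A * Bᵀ) = B.det * pfaffianSum A := by
  have hdet := (pfaffianAlternatingMap A).eq_smul_basis_det (Pi.basisFun R (ι × Fin 2))
  have hB := congr($hdet fun x => B x)
  rw [pfaffianAlternatingMap_apply, AlternatingMap.smul_apply, Pi.basisFun_det_apply] at hB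
  have hbasis : ⇑(Pi.basisFun R (ι × Fin 2)) = fun x => (1 : Matrix (ι × Fin 2) (ι × Fin 2) R) x := by
    ext x y
    simp [one_apply, Pi.single_apply, eq_comm]
  rw [hB, hbasis, pfaffianAlternatingMap_apply, Matrix.one_mul, transpose_one, Matrix.mul_one,
    smul_eq_mul, mul_comm]
  rfl

end Congruence

section BlockDiagonal

def symplecticBlock : Matrix (Fin 2) (Fin 2) R := !![0, 1; -1, 0]

theorem symplecticBlock_apply_perm (τ : Perm (Fin 2)) :
    symplecticBlock (τ 0) (τ 1) = (Perm.sign τ : R) := by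
  obtain rfl | rfl : τ = 1 ∨ τ = Equiv.swap 0 1 := by revert τ; decide
  all_goals simp [symplecticBlock]

theorem diagonal_kronecker_symplecticBlock_apply_ne_zero [DecidableEq ι] {a : ι → R}
    {x y : ι × Fin 2} (h : (diagonal a ⊗ₖ symplecticBlock) x y ≠ 0) : x.1 = y.1 ∧ x.2 ≠ y.2 := by
  rw [kroneckerMap_apply] at h
  have hdiag : ∀ r : Fin 2, symplecticBlock r r = (0 : R) := by
    simp [Fin.forall_fin_two, symplecticBlock]
  refine ⟨?_, fun heq => h ?_⟩
  · by_contra hne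
    exact h (by rw [diagonal_apply_ne _ hne, zero_mul])
  · rw [heq, hdiag, mul_zero]

variable [Fintype ι] [DecidableEq ι]

theorem det_diagonal_kronecker_symplecticBlock (a : ι → R) :
    (diagonal a ⊗ₖ symplecticBlock).det = (∏ i, a i) ^ 2 := by
  simp [det_kronecker, symplecticBlock, det_fin_two_of]

theorem pfaffianSum_diagonal_kronecker_symplecticBlock (a : ι → R) :
    pfaffianSum (diagonal a ⊗ₖ symplecticBlock) =
      ((2 ^ Fintype.card ι * (Fintype.card ι).factorial : ℕ) : R) * ∏ i, a i := by
  have hsq : ∀ u : ℤˣ, ((u : ℤ) : R) * ((u : ℤ) : R) = 1 := fun u => by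
    rw [← Int.cast_mul, ← Units.val_mul, Int.units_mul_self, Units.val_one, Int.cast_one]
  rw [pfaffianSum, ← Fintype.sum_of_injective _ Perm.prodShear_injective (fun _ => ∏ i, a i)]
  · simp [Fintype.card_perm, mul_comm]
  · intro σ hσ
    by_contra h
    obtain ⟨π, g, rfl⟩ := Perm.exists_prodShear_eq σ fun i =>
      diagonal_kronecker_symplecticBlock_apply_ne_zero fun h0 =>
        h (by rw [Finset.prod_eq_zero (mem_univ i) h0, mul_zero])
    exact hσ ⟨(π, g), rfl⟩
  · rintro ⟨π, g⟩
    simp only [prodShear_apply, kroneckerMap_apply, diagonal_apply_eq, symplecticBlock_apply_perm,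
      Perm.sign_prodShear, Units.coe_prod, Int.cast_prod, Finset.prod_mul_distrib]
    rw [mul_left_comm, ← Finset.prod_mul_distrib, Equiv.prod_comp π a]
    simp [hsq]

end BlockDiagonal

section IsCongruentTo

def IsCongruentTo [Fintype n] (A : Matrix m m R) (D : Matrix n n R) : Prop :=
  ∃ B : Matrix m n R, A = B * D * Bᵀ

theorem IsCongruentTo.trans {l : Type*} [Fintype n] [Fintype l] {A : Matrix m m R}
    {C : Matrix n n R} {D : Matrix l l R} (h₁ : IsCongruentTo A C) (h₂ : IsCongruentTo C D) :
    IsCongruentTo A D := by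
  obtain ⟨B₁, rfl⟩ := h₁
  obtain ⟨B₂, rfl⟩ := h₂
  exact ⟨B₁ * B₂, by simp only [transpose_mul, Matrix.mul_assoc]⟩

theorem isCongruentTo_submatrix [Fintype n] [DecidableEq n] (A : Matrix n n R) (e : m → n) :
    IsCongruentTo (A.submatrix e e) A :=
  ⟨(1 : Matrix n n R).submatrix e id, by
    ext x y
    simp [mul_apply, one_apply]⟩

theorem isCongruentTo_submatrix_equiv [Fintype m] [DecidableEq m] [Fintype n] (A : Matrix n n R)
    (e : m ≃ n) : IsCongruentTo A (A.submatrix e e) := by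
  simpa using isCongruentTo_submatrix (A.submatrix e e) e.symm

theorem IsCongruentTo.fromBlocks₂₂ {l : Type*} [Fintype l] [DecidableEq l] [Fintype n]
    {S : Matrix m m R} {D : Matrix n n R}
    (h : IsCongruentTo S D) (A : Matrix l l R) :
    IsCongruentTo (fromBlocks A 0 0 S) (fromBlocks A 0 0 D) := by
  obtain ⟨B, rfl⟩ := h
  exact ⟨fromBlocks 1 0 0 B, by simp [fromBlocks_transpose, fromBlocks_multiply]⟩

theorem pfaffianSum_sq_of_isCongruentTo [Fintype ι] [DecidableEq ι]
    {A : Matrix (ι × Fin 2) (ι × Fin 2) R} {a : ι → R}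
    (h : IsCongruentTo A (diagonal a ⊗ₖ symplecticBlock)) :
    pfaffianSum A ^ 2 =
      ((2 ^ Fintype.card ι * (Fintype.card ι).factorial : ℕ) : R) ^ 2 * A.det := by
  obtain ⟨B, rfl⟩ := h
  rw [pfaffianSum_mul_mul_transpose, pfaffianSum_diagonal_kronecker_symplecticBlock, det_mul,
    det_mul, det_transpose, det_diagonal_kronecker_symplecticBlock]
  ring

end IsCongruentTo

section IsAlternating

def IsAlternating (A : Matrix n n R) : Prop :=
  Aᵀ = -A ∧ ∀ i, A i i = 0

theorem isAlternating_sub_transpose (U : Matrix n n R) : IsAlternating (U - Uᵀ) :=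
  ⟨by rw [transpose_sub, transpose_transpose, neg_sub], fun i => sub_self (U i i)⟩

theorem IsAlternating.exists_eq_sub_transpose {A : Matrix n n R} (hA : IsAlternating A) :
    ∃ U, A = U - Uᵀ := by
  let : LinearOrder n := WellOrderingRel.isWellOrder.linearOrder
  refine ⟨of fun i j => if i < j then A i j else 0, ?_⟩
  ext i j
  have hji : A j i = -A i j := congr_fun₂ hA.1 i j
  rcases lt_trichotomy i j with h | rfl | h
  · simp [h, h.not_gt]
  · simp [hA.2]
  · simp [h, h.not_gt, hji]

theorem isAlternating_of_transpose_eq_neg {A : Matrix n n R} (hA : Aᵀ = -A)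
    (h2 : IsUnit (2 : R)) : IsAlternating A := by
  refine ⟨hA, fun i => h2.mul_right_eq_zero.mp ?_⟩
  have h := congr_fun₂ hA i i
  simp only [transpose_apply, neg_apply] at h
  linear_combination h

theorem IsAlternating.map {S : Type*} [CommRing S] {A : Matrix n n R} (hA : IsAlternating A)
    (f : R →+* S) : IsAlternating (A.map f) :=
  ⟨by rw [← transpose_map, hA.1]; ext; simp, fun i => by simp [hA.2]⟩

theorem IsCongruentTo.isAlternating [Fintype n] {A : Matrix m m R} {D : Matrix n n R}
    (h : IsCongruentTo A D) (hD : IsAlternating D) : IsAlternating A := by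
  obtain ⟨B, rfl⟩ := h
  -- Writing `D = U - Uᵀ` gives the vanishing diagonal without dividing by `2`.
  obtain ⟨U, rfl⟩ := hD.exists_eq_sub_transpose
  have : B * (U - Uᵀ) * Bᵀ = B * U * Bᵀ - (B * U * Bᵀ)ᵀ := by
    simp [Matrix.mul_sub, Matrix.sub_mul, transpose_mul, Matrix.mul_assoc]
  rw [this]
  exact isAlternating_sub_transpose _

theorem IsAlternating.submatrix {A : Matrix n n R} (hA : IsAlternating A) (e : m → n) :
    IsAlternating (A.submatrix e e) :=
  ⟨by rw [transpose_submatrix, hA.1]; rfl, fun i => hA.2 (e i)⟩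

theorem IsAlternating.eq_smul_symplecticBlock {M : Matrix (Fin 2) (Fin 2) R}
    (hM : IsAlternating M) : M = M 0 1 • symplecticBlock := by
  have h10 : M 1 0 = -M 0 1 := congr_fun₂ hM.1 0 1
  ext i j
  fin_cases i <;> fin_cases j <;> simp [symplecticBlock, hM.2, h10]

theorem IsAlternating.transpose_invOf [Fintype n] [DecidableEq n] {A : Matrix n n R}
    (hA : IsAlternating A) [Invertible A] : (⅟A)ᵀ = -⅟A := by
  have h : -(⅟A)ᵀ * A = 1 := by
    rw [Matrix.neg_mul, ← Matrix.mul_neg, ← hA.1, ← transpose_mul, mul_invOf_self, transpose_one]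
  exact neg_eq_iff_eq_neg.mp (invOf_eq_left_inv h).symm

end IsAlternating

section Schur

variable {l : Type*} [Fintype l] [DecidableEq l] [Fintype n] [DecidableEq n]
  {N : Matrix (l ⊕ n) (l ⊕ n) R} [Invertible N.toBlocks₁₁]

theorem IsAlternating.eq_fromBlocks_schur (hN : IsAlternating N) :
    N = fromBlocks 1 0 (N.toBlocks₂₁ * ⅟N.toBlocks₁₁) 1 *
      fromBlocks N.toBlocks₁₁ 0 0 (N.toBlocks₂₂ - N.toBlocks₂₁ * ⅟N.toBlocks₁₁ * N.toBlocks₁₂) *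
      (fromBlocks 1 0 (N.toBlocks₂₁ * ⅟N.toBlocks₁₁) 1)ᵀ := by
  have h₁₁ : IsAlternating N.toBlocks₁₁ := hN.submatrix Sum.inl
  have h₁₂ : N.toBlocks₁₂ = -N.toBlocks₂₁ᵀ := by
    ext i j
    exact congr_fun₂ hN.1 (Sum.inr j) (Sum.inl i)
  conv_lhs => rw [← fromBlocks_toBlocks N, fromBlocks_eq_of_invertible₁₁]
  rw [fromBlocks_transpose, transpose_mul, h₁₁.transpose_invOf, h₁₂]
  simp

theorem IsAlternating.isCongruentTo_fromBlocks_schur (hN : IsAlternating N) :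
    IsCongruentTo N (fromBlocks N.toBlocks₁₁ 0 0
      (N.toBlocks₂₂ - N.toBlocks₂₁ * ⅟N.toBlocks₁₁ * N.toBlocks₁₂)) :=
  ⟨_, hN.eq_fromBlocks_schur⟩

theorem IsAlternating.schur (hN : IsAlternating N) :
    IsAlternating (N.toBlocks₂₂ - N.toBlocks₂₁ * ⅟N.toBlocks₁₁ * N.toBlocks₁₂) := by
  set X := N.toBlocks₂₁ * ⅟N.toBlocks₁₁
  set F := fromBlocks N.toBlocks₁₁ 0 0 (N.toBlocks₂₂ - X * N.toBlocks₁₂)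
  have hX : fromBlocks 1 0 (-X) 1 * fromBlocks 1 0 X 1 = (1 : Matrix (l ⊕ n) (l ⊕ n) R) := by
    simp [fromBlocks_multiply]
  have hF : IsCongruentTo F N := ⟨fromBlocks 1 0 (-X) 1, by
    rw [hN.eq_fromBlocks_schur, ← Matrix.mul_assoc, ← Matrix.mul_assoc, hX, Matrix.mul_assoc,
      Matrix.mul_assoc, ← transpose_mul, hX, transpose_one, Matrix.one_mul, Matrix.mul_one]⟩
  exact (hF.isAlternating hN).submatrix Sum.inr

end Schur

section NormalForm

theorem submatrix_prodCongr_diagonal_kronecker {α β o : Type*} [DecidableEq α] [DecidableEq β]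
    (e : α ≃ β) (a : β → R) (M : Matrix o o R) :
    (diagonal a ⊗ₖ M).submatrix (e.prodCongr (.refl o)) (e.prodCongr (.refl o)) =
      diagonal (a ∘ e) ⊗ₖ M := by
  ext ⟨i, r⟩ ⟨j, s⟩
  simp [diagonal_apply]

theorem submatrix_optionProdEquiv_diagonal_kronecker {α o : Type*} [DecidableEq α] (b : R)
    (a : α → R) (M : Matrix o o R) :
    (diagonal (fun x => x.elim b a) ⊗ₖ M).submatrix optionProdEquiv.symm optionProdEquiv.symm =
      fromBlocks (b • M) 0 0 (diagonal a ⊗ₖ M) := by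
  ext (r | ⟨i, r⟩) (s | ⟨j, s⟩) <;> simp [diagonal_apply]

variable {K : Type*} [Field K]

theorem IsAlternating.exists_isCongruentTo_diagonal_kronecker_option {α : Type*} [Fintype α]
    [DecidableEq α] (ih : ∀ A : Matrix (α × Fin 2) (α × Fin 2) K, IsAlternating A →
      ∃ a : α → K, IsCongruentTo A (diagonal a ⊗ₖ symplecticBlock))
    {A : Matrix (Option α × Fin 2) (Option α × Fin 2) K} (hA : IsAlternating A) :
    ∃ a : Option α → K, IsCongruentTo A (diagonal a ⊗ₖ symplecticBlock) := by
  by_cases hA0 : A = 0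
  · exact ⟨0, 0, by simp [hA0]⟩
  obtain ⟨x, y, hxy⟩ : ∃ x y, A x y ≠ 0 := by
    by_contra! h
    exact hA0 (ext h)
  obtain ⟨t, hx, hy⟩ := exists_equiv_extending_pair optionProdEquiv.symm
    fun h : x = y => hxy (h ▸ hA.2 x)
  set N := A.submatrix t t
  have hN : IsAlternating N := hA.submatrix t
  have hN₁₁ : N.toBlocks₁₁ = A x y • symplecticBlock := by
    have h₁₁ : IsAlternating N.toBlocks₁₁ := hN.submatrix Sum.inl
    rw [h₁₁.eq_smul_symplecticBlock]
    simp [N, toBlocks₁₁, hx, hy]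
  have : Invertible N.toBlocks₁₁ := invertibleOfIsUnitDet _ (by
    simp [hN₁₁, symplecticBlock, det_fin_two_of, hxy])
  obtain ⟨a, ha⟩ := ih _ hN.schur
  have hblocks : fromBlocks N.toBlocks₁₁ 0 0 (diagonal a ⊗ₖ symplecticBlock) =
      (diagonal (fun o => o.elim (A x y) a) ⊗ₖ symplecticBlock).submatrix
        optionProdEquiv.symm optionProdEquiv.symm := by
    rw [hN₁₁, submatrix_optionProdEquiv_diagonal_kronecker]
  refine ⟨fun o => o.elim (A x y) a, (isCongruentTo_submatrix_equiv A t).trans ?_⟩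
  exact hN.isCongruentTo_fromBlocks_schur.trans <| (ha.fromBlocks₂₂ _).trans <|
    hblocks ▸ isCongruentTo_submatrix _ _

theorem IsAlternating.exists_isCongruentTo_diagonal_kronecker [Fintype ι] [DecidableEq ι]
    {A : Matrix (ι × Fin 2) (ι × Fin 2) K} (hA : IsAlternating A) :
    ∃ a : ι → K, IsCongruentTo A (diagonal a ⊗ₖ symplecticBlock) := by
  refine Fintype.induction_empty_option (P := fun ι _ => ∀ [DecidableEq ι]
    (A : Matrix (ι × Fin 2) (ι × Fin 2) K), IsAlternating A →
      ∃ a : ι → K, IsCongruentTo A (diagonal a ⊗ₖ symplecticBlock)) ?_ ?_ ?_ ι A hA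
  · intro α β _ e ih _ A hA
    classical
    let _ : Fintype α := .ofEquiv β e.symm
    let f := e.prodCongr (.refl (Fin 2))
    obtain ⟨a, ha⟩ := ih _ (hA.submatrix f)
    refine ⟨a ∘ e.symm, (isCongruentTo_submatrix_equiv A f).trans (ha.trans ?_)⟩
    have h := isCongruentTo_submatrix (diagonal (a ∘ e.symm) ⊗ₖ symplecticBlock) f
    rwa [submatrix_prodCongr_diagonal_kronecker, Function.comp_assoc, e.symm_comp_self,
      Function.comp_id] at h
  · intro _ A _
    exact ⟨0, A, Subsingleton.elim _ _⟩
  · intro α _ ih inst A hA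
    classical
    obtain rfl : inst = Option.instDecidableEq := Subsingleton.elim _ _
    exact hA.exists_isCongruentTo_diagonal_kronecker_option (ih · ·)

end NormalForm

section PolynomialIdentity

variable [Fintype ι] [DecidableEq ι]

theorem IsAlternating.pfaffianSum_sq_of_field {K : Type*} [Field K]
    {A : Matrix (ι × Fin 2) (ι × Fin 2) K} (hA : IsAlternating A) :
    pfaffianSum A ^ 2 = ((2 ^ Fintype.card ι * (Fintype.card ι).factorial : ℕ) : K) ^ 2 * A.det :=
  let ⟨_, h⟩ := hA.exists_isCongruentTo_diagonal_kronecker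
  pfaffianSum_sq_of_isCongruentTo h

theorem IsAlternating.pfaffianSum_sq_of_isDomain [IsDomain R]
    {A : Matrix (ι × Fin 2) (ι × Fin 2) R} (hA : IsAlternating A) :
    pfaffianSum A ^ 2 = ((2 ^ Fintype.card ι * (Fintype.card ι).factorial : ℕ) : R) ^ 2 * A.det := by
  apply IsFractionRing.injective R (FractionRing R)
  have h := (hA.map (algebraMap R (FractionRing R))).pfaffianSum_sq_of_field
  rwa [pfaffianSum_map, ← RingHom.mapMatrix_apply, ← RingHom.map_det, ← map_pow,
    ← map_natCast (algebraMap R (FractionRing R)), ← map_pow, ← map_mul] at h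

theorem IsAlternating.pfaffianSum_sq {A : Matrix (ι × Fin 2) (ι × Fin 2) R}
    (hA : IsAlternating A) :
    pfaffianSum A ^ 2 = ((2 ^ Fintype.card ι * (Fintype.card ι).factorial : ℕ) : R) ^ 2 * A.det := by
  obtain ⟨U, rfl⟩ := hA.exists_eq_sub_transpose
  set X := mvPolynomialX (ι × Fin 2) (ι × Fin 2) ℤ
  have hX := (isAlternating_sub_transpose X).pfaffianSum_sq_of_isDomain
  set φ := MvPolynomial.eval₂Hom (Int.castRingHom R) fun p : (ι × Fin 2) × (ι × Fin 2) => U p.1 p.2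
  have hφ : (X - Xᵀ).map φ = U - Uᵀ := by
    ext i j
    simp [φ, X]
  have h := congr_arg φ hX
  rwa [map_mul, map_pow, map_pow, map_natCast, ← pfaffianSum_map, RingHom.map_det,
    RingHom.mapMatrix_apply, hφ] at h

end PolynomialIdentity

end Matrix

open Finset in
/-- For a skew-symmetric `2n × 2n` matrix `A` over a commutative ring `R`, the Pfaffian
`p` of `A` — characterized by `(2^n * n!) * p = ∑_{σ} sgn σ ∏_{i<n} A_{σ(2i), σ(2i+1)}`,
with `2^n * n!` a unit in `R` — satisfies `p ^ 2 = det A`. -/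
theorem pfaffian_sq_eq_det {R : Type*} [CommRing R] (n : ℕ)
    (A : Matrix (Fin (2 * n)) (Fin (2 * n)) R)
    (hskew : A.transpose = -A)
    (hunit : IsUnit ((2 ^ n * Nat.factorial n : ℕ) : R))
    (p : R)
    (hp : ((2 ^ n * Nat.factorial n : ℕ) : R) * p =
      ∑ σ : Equiv.Perm (Fin (2 * n)),
        ((Equiv.Perm.sign σ : ℤ) : R) *
          ∏ i : Fin n,
            A (σ ⟨2 * i.val, by omega⟩) (σ ⟨2 * i.val + 1, by omega⟩)) :
    p ^ 2 = A.det := by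
  set e : Fin n × Fin 2 ≃ Fin (2 * n) := finProdFinEquiv.trans (finCongr (mul_comm n 2))
  have hA : A.IsAlternating := by
    rcases Nat.eq_zero_or_pos n with rfl | hn
    · exact ⟨hskew, fun i => absurd i.2 (by simp)⟩
    refine Matrix.isAlternating_of_transpose_eq_neg hskew (isUnit_of_dvd_unit ?_ hunit)
    have h2 : 2 ∣ 2 ^ n * n.factorial := dvd_mul_of_dvd_left (dvd_pow_self 2 hn.ne') _
    simpa using Nat.cast_dvd_cast (α := R) h2
  have hpf : ((2 ^ n * Nat.factorial n : ℕ) : R) * p = (A.submatrix e e).pfaffianSum := by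
    rw [hp, ← Matrix.sum_perm_sign_mul_prod_eq_pfaffianSum_submatrix]
    refine Finset.sum_congr rfl fun σ _ => congr_arg _ (Finset.prod_congr rfl fun i _ => ?_)
    congr 2 <;> ext <;> simp [e, add_comm]
  have hkey := (hA.submatrix e).pfaffianSum_sq
  rw [← hpf, Matrix.det_submatrix_equiv_self, Fintype.card_fin, mul_pow] at hkey
  exact (hunit.pow 2).mul_left_cancel hkey
end

section
/- For a quadrilateral face of an isoradially embedded bipartite graph with vertices w1, b1, w2, b2 in cyclic order, let the weights be K_{w,b} = 2 sin(θ_{wb}) e^{iα_{wb}}, where e^{iα_{wb}} is the unit vector from w to b and θ_{wb} is the rhombus half-angle. Assume the four rhombus half-angles θ_{w1b1}, θ_{b1w2}, θ_{w2b2}, θ_{b2w1} are positive and sum to π. Assume the edge directions α_{w_jb_k} are determined by the isoradial embedding, so that each edge wb is the diagonal of a rhombus and, going around the face, the rhombus angles at the center sum to 2π. Then K_{w1,b1}K_{w2,b2}/(K_{w2,b1}K_{w1,b2}) is a negative real number. -/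
/-- The Kasteleyn coefficient of an isoradially embedded edge joining the points at angles
`s` and `t` on the unit circumcircle of a face: the rhombus half-angle is `(t-s)/2`, the
edge direction is `e^{i((s+t)/2 + π/2)}`, and `K = 2 sin θ e^{iα}`. -/
noncomputable def kasteleynCoeff (s t : ℝ) : ℂ :=
  2 * (Real.sin ((t - s) / 2) : ℂ) *
    Complex.exp (Complex.I * (((s + t) / 2 : ℝ) + Real.pi / 2))

/-- Kasteleyn flatness for a quadrilateral face (`m = 2`) of an isoradially embedded
bipartite graph: if `w1, b1, w2, b2` sit at angles `t1 < t2 < t3 < t4 < t1 + 2π` on the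
unit circumcircle of the face, with all four rhombus half-angles `(t_{j+1}-t_j)/2` in
`(0, π/2)` (their doubles summing to `2π` around the center), then
`K_{w1,b1}·K_{w2,b2} / (K_{w2,b1}·K_{w1,b2})` is a negative real number. -/
theorem kasteleyn_flat_quadrilateral (t1 t2 t3 t4 : ℝ)
    (h12 : t1 < t2) (h23 : t2 < t3) (h34 : t3 < t4) (h41 : t4 < t1 + 2 * Real.pi)
    (hθ1 : (t2 - t1) / 2 < Real.pi / 2) (hθ2 : (t3 - t2) / 2 < Real.pi / 2)
    (hθ3 : (t4 - t3) / 2 < Real.pi / 2) (hθ4 : (t1 + 2 * Real.pi - t4) / 2 < Real.pi / 2) :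
    ∃ c : ℝ, c < 0 ∧
      kasteleynCoeff t1 t2 * kasteleynCoeff t3 t4 /
        (kasteleynCoeff t3 t2 * kasteleynCoeff t1 t4) = (c : ℂ) := by
  have hpi := Real.pi_pos
  have hs1 : 0 < Real.sin ((t2 - t1) / 2) :=
    Real.sin_pos_of_pos_of_lt_pi (by linarith) (by linarith)
  have hs2 : 0 < Real.sin ((t3 - t2) / 2) :=
    Real.sin_pos_of_pos_of_lt_pi (by linarith) (by linarith)
  have hs3 : 0 < Real.sin ((t4 - t3) / 2) :=
    Real.sin_pos_of_pos_of_lt_pi (by linarith) (by linarith)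
  have hs4 : 0 < Real.sin ((t4 - t1) / 2) :=
    Real.sin_pos_of_pos_of_lt_pi (by linarith) (by linarith)
  have hneg : Real.sin ((t2 - t3) / 2) = -Real.sin ((t3 - t2) / 2) := by
    rw [show (t2 - t3) / 2 = -((t3 - t2) / 2) from by ring, Real.sin_neg]
  refine ⟨-(Real.sin ((t2 - t1) / 2) * Real.sin ((t4 - t3) / 2)) /
      (Real.sin ((t3 - t2) / 2) * Real.sin ((t4 - t1) / 2)),
    div_neg_of_neg_of_pos (by nlinarith) (mul_pos hs2 hs4), ?_⟩
  have hS2 : Complex.sin (((t3 : ℂ) - t2) / 2) ≠ 0 := by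
    rw [show ((t3 : ℂ) - t2) / 2 = (((t3 - t2) / 2 : ℝ) : ℂ) from by push_cast; ring,
      ← Complex.ofReal_sin]
    exact_mod_cast hs2.ne'
  have hS4 : Complex.sin (((t4 : ℂ) - t1) / 2) ≠ 0 := by
    rw [show ((t4 : ℂ) - t1) / 2 = (((t4 - t1) / 2 : ℝ) : ℂ) from by push_cast; ring,
      ← Complex.ofReal_sin]
    exact_mod_cast hs4.ne'
  have hB : kasteleynCoeff t3 t2 * kasteleynCoeff t1 t4 ≠ 0 := by
    simp only [kasteleynCoeff, hneg]
    push_cast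
    refine mul_ne_zero (mul_ne_zero (mul_ne_zero two_ne_zero ?_) (Complex.exp_ne_zero _))
      (mul_ne_zero (mul_ne_zero two_ne_zero ?_) (Complex.exp_ne_zero _))
    · exact neg_ne_zero.mpr hS2
    · exact hS4
  have key : Complex.exp (Complex.I * (((t1 : ℂ) + t2) / 2 + (Real.pi : ℂ) / 2)) *
      Complex.exp (Complex.I * (((t3 : ℂ) + t4) / 2 + (Real.pi : ℂ) / 2)) =
      Complex.exp (Complex.I * (((t3 : ℂ) + t2) / 2 + (Real.pi : ℂ) / 2)) *
      Complex.exp (Complex.I * (((t1 : ℂ) + t4) / 2 + (Real.pi : ℂ) / 2)) := by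
    rw [← Complex.exp_add, ← Complex.exp_add]
    ring_nf
  rw [div_eq_iff hB]
  simp only [kasteleynCoeff, hneg]
  push_cast
  rw [div_mul_eq_mul_div, eq_div_iff (mul_ne_zero hS2 hS4)]
  linear_combination (4 * Complex.sin (((t2 : ℂ) - t1) / 2) * Complex.sin (((t4 : ℂ) - t3) / 2) *
    Complex.sin (((t3 : ℂ) - t2) / 2) * Complex.sin (((t4 : ℂ) - t1) / 2)) * key
end

section
/- Telescoping of the star contributions: let e^{iγ_1}, ..., e^{iγ_k}, and back to e^{iγ_{k+1}} = e^{iγ_1}, be unit vectors in cyclic order around a vertex v of an isoradial graph (γ_1 < γ_2 < ... < γ_k < γ_1 + 2π), so that neighbor u_j satisfies u_j - v = e^{iγ_j} + e^{iγ_{j+1}} and θ_j = (γ_{j+1} - γ_j)/2 ∈ (0, π/2). Then ∑_{j=1}^k tan(θ_j)(u_j - v) = 0. -/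
/-!
Writing `e^{iγ_j}` and `e^{iγ_{j+1}}` around their midpoint direction `w = e^{i(γ_j+γ_{j+1})/2}`
gives `e^{iγ_j} + e^{iγ_{j+1}} = 2 cos θ_j · w` and `e^{iγ_{j+1}} - e^{iγ_j} = 2i sin θ_j · w`, so
`tan θ_j (u_j - v) = -i (e^{iγ_{j+1}} - e^{iγ_j})` as long as `cos θ_j ≠ 0`. The sum therefore
telescopes to `-i (e^{iγ_k} - e^{iγ_0})`, which vanishes because `γ_k = γ_0 + 2π`.
-/

open Finset

namespace Complex

theorem exp_mul_I_sub_add_exp_mul_I_add (c x : ℂ) :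
    exp (I * (c - x)) + exp (I * (c + x)) = 2 * cos x * exp (I * c) := by
  rw [two_cos, add_mul, ← exp_add, ← exp_add, add_comm]
  ring_nf

theorem exp_mul_I_add_sub_exp_mul_I_sub (c x : ℂ) :
    exp (I * (c + x)) - exp (I * (c - x)) = 2 * I * sin x * exp (I * c) := by
  have hplus : exp (I * (c + x)) = exp (x * I) * exp (I * c) := by rw [← exp_add]; ring_nf
  have hminus : exp (I * (c - x)) = exp (-x * I) * exp (I * c) := by rw [← exp_add]; ring_nf
  rw [hplus, hminus, show 2 * I * sin x = I * (2 * sin x) by ring, two_sin]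
  ring_nf
  rw [I_sq]
  ring

end Complex

open Complex in
theorem tan_half_mul_exp_add_exp (a b : ℝ) (h : Real.cos ((b - a) / 2) ≠ 0) :
    (Real.tan ((b - a) / 2) : ℂ) * (exp (I * a) + exp (I * b)) =
      -I * (exp (I * b) - exp (I * a)) := by
  set c : ℂ := (a + b) / 2
  set θ : ℝ := (b - a) / 2
  have ha : (a : ℂ) = c - θ := by simp only [c, θ]; push_cast; ring
  have hb : (b : ℂ) = c + θ := by simp only [c, θ]; push_cast; ring
  have hcos : cos θ ≠ 0 := by exact_mod_cast h
  rw [ha, hb, exp_mul_I_sub_add_exp_mul_I_add, exp_mul_I_add_sub_exp_mul_I_sub, ofReal_tan,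
    tan_eq_sin_div_cos]
  field_simp
  ring_nf
  rw [I_sq]
  ring

theorem star_telescoping_general (k : ℕ) (γ : ℕ → ℝ) (v : ℂ) (u : ℕ → ℂ)
    (hmono : ∀ j < k, γ j < γ (j + 1))
    (hgap : ∀ j < k, γ (j + 1) - γ j < Real.pi)
    (hper : γ k = γ 0 + 2 * Real.pi)
    (hu : ∀ j < k, u j = v + Complex.exp (Complex.I * γ j) +
      Complex.exp (Complex.I * γ (j + 1))) :
    ∑ j ∈ Finset.range k, (Real.tan ((γ (j + 1) - γ j) / 2) : ℂ) * (u j - v) = 0 := by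
  set e : ℕ → ℂ := fun j => Complex.exp (Complex.I * γ j)
  have hterm : ∀ j ∈ range k,
      (Real.tan ((γ (j + 1) - γ j) / 2) : ℂ) * (u j - v) = -Complex.I * (e (j + 1) - e j) := by
    intro j hj
    have hj := mem_range.mp hj
    have hcos : Real.cos ((γ (j + 1) - γ j) / 2) ≠ 0 :=
      (Real.cos_pos_of_mem_Ioo ⟨by linarith [hmono j hj, Real.pi_pos], by linarith [hgap j hj]⟩).ne'
    rw [hu j hj, add_assoc, add_sub_cancel_left]
    exact tan_half_mul_exp_add_exp _ _ hcos
  have hclosed : e k = e 0 := by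
    simp only [e, hper]
    push_cast
    rw [mul_add, Complex.exp_add, show Complex.I * (2 * Real.pi) = 2 * Real.pi * Complex.I by ring,
      Complex.exp_two_pi_mul_I, mul_one]
  rw [sum_congr rfl hterm, ← mul_sum, sum_range_sub e, hclosed, sub_self, mul_zero]

/-- Telescoping of the star contributions around a vertex of an isoradial graph: if
`e^{iγ_0}, …, e^{iγ_{k-1}}` are the rhombus side directions around a vertex `v`, in strictly
increasing cyclic order with `γ_k = γ_0 + 2π` and gaps `γ_{j+1} - γ_j < π`, and the
neighbors are `u_j = v + e^{iγ_j} + e^{iγ_{j+1}}` with half-angles `θ_j = (γ_{j+1}-γ_j)/2`,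
then `∑_j tan(θ_j)·(u_j - v) = 0`: `v` is the conductance-weighted barycenter of its
neighbors. -/
theorem star_telescoping (k : ℕ) (hk : 0 < k) (γ : ℕ → ℝ) (v : ℂ) (u : ℕ → ℂ)
    (hmono : ∀ j < k, γ j < γ (j + 1))
    (hgap : ∀ j < k, γ (j + 1) - γ j < Real.pi)
    (hper : γ k = γ 0 + 2 * Real.pi)
    (hu : ∀ j < k, u j = v + Complex.exp (Complex.I * γ j) +
      Complex.exp (Complex.I * γ (j + 1))) :
    ∑ j ∈ Finset.range k, (Real.tan ((γ (j + 1) - γ j) / 2) : ℂ) * (u j - v) = 0 :=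
  star_telescoping_general k γ v u hmono hgap hper hu
end

section
/- Restriction of discrete holomorphic functions to primal vertices is harmonic: with the star around vertex v as above (neighbors u_j = v + e^{iγ_j} + e^{iγ_{j+1}}, dual vertices x_j = v + e^{iγ_j}), if f : {v, u_1, ..., u_k, x_1, ..., x_k} → ℂ satisfies the discrete Cauchy-Riemann equation (f(u_j) - f(v))/(u_j - v) = (f(x_{j+1}) - f(x_j))/(x_{j+1} - x_j) on every rhombus j (indices mod k), then ∑_{j=1}^k tan(θ_j)(f(u_j) - f(v)) = 0, i.e., f restricted to primal vertices is discrete harmonic at v. -/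
/-!
Write `e^{iγ_j} + e^{iγ_{j+1}} = 2 cos θ_j · e^{iμ_j}` and `e^{iγ_{j+1}} - e^{iγ_j} = 2i sin θ_j · e^{iμ_j}`
with `μ_j` the mean angle. The Cauchy-Riemann equation on rhombus `j` then says
`tan θ_j · (f(u_j) - f(v)) = -i (f(x_{j+1}) - f(x_j))`, and summing over `j` the right-hand sides
telescope to `-i (f(x_k) - f(x_0)) = 0`, because the star closes up: `x_k = x_0`.
-/

open Finset

namespace Complex

theorem exp_mul_I_add_exp_mul_I (a b : ℂ) :
    exp (I * a) + exp (I * b) = 2 * cos ((b - a) / 2) * exp (I * ((a + b) / 2)) := by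
  rw [show I * a = I * ((a + b) / 2) + -((b - a) / 2) * I by ring,
    show I * b = I * ((a + b) / 2) + (b - a) / 2 * I by ring,
    exp_add, exp_add, exp_mul_I, exp_mul_I, cos_neg, sin_neg]
  ring

theorem exp_mul_I_sub_exp_mul_I (a b : ℂ) :
    exp (I * b) - exp (I * a) = 2 * I * sin ((b - a) / 2) * exp (I * ((a + b) / 2)) := by
  rw [show I * a = I * ((a + b) / 2) + -((b - a) / 2) * I by ring,
    show I * b = I * ((a + b) / 2) + (b - a) / 2 * I by ring,
    exp_add, exp_add, exp_mul_I, exp_mul_I, cos_neg, sin_neg]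
  ring

theorem exp_mul_I_sub_div_exp_mul_I_add (a b : ℂ) :
    (exp (I * b) - exp (I * a)) / (exp (I * a) + exp (I * b)) = I * tan ((b - a) / 2) := by
  rw [exp_mul_I_sub_exp_mul_I, exp_mul_I_add_exp_mul_I, tan_eq_sin_div_cos]
  have hE : 2 * exp (I * ((a + b) / 2)) ≠ 0 := mul_ne_zero two_ne_zero (exp_ne_zero _)
  rw [show ∀ s c e : ℂ, 2 * I * s * e / (2 * c * e) = I * s * (2 * e) / (c * (2 * e)) by
      intros; ring, mul_div_mul_right _ _ hE, mul_div_assoc]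

/-- Cauchy-Riemann on one rhombus: `A` is the increment of `f` along the diagonal `v → u`,
`B` the one along the dual diagonal `x_j → x_{j+1}`. -/
theorem tan_mul_eq_neg_I_mul_of_div_eq_div {a b A B : ℂ} (hsin : sin ((b - a) / 2) ≠ 0)
    (hCR : A / (exp (I * a) + exp (I * b)) = B / (exp (I * b) - exp (I * a))) :
    tan ((b - a) / 2) * A = -I * B := by
  have hq : exp (I * b) - exp (I * a) ≠ 0 := by
    rw [exp_mul_I_sub_exp_mul_I]
    exact mul_ne_zero (mul_ne_zero (mul_ne_zero two_ne_zero I_ne_zero) hsin) (exp_ne_zero _)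
  have hB : B = A * ((exp (I * b) - exp (I * a)) / (exp (I * a) + exp (I * b))) := by
    rw [← div_mul_cancel₀ B hq, ← hCR]
    ring
  rw [hB, exp_mul_I_sub_div_exp_mul_I_add]
  linear_combination tan ((b - a) / 2) * A * I_sq

end Complex

open Complex in
theorem discrete_holomorphic_restriction_harmonic_general
    (k : ℕ) (γ : ℕ → ℝ) (v : ℂ) (u x : ℕ → ℂ) (f : ℂ → ℂ)
    (hmono : ∀ j < k, γ j < γ (j + 1))
    (hgap : ∀ j < k, γ (j + 1) - γ j < Real.pi)
    (hper : γ k = γ 0 + 2 * Real.pi)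
    (hu : ∀ j < k, u j = v + Complex.exp (Complex.I * γ j) +
      Complex.exp (Complex.I * γ (j + 1)))
    (hx : ∀ j ≤ k, x j = v + Complex.exp (Complex.I * γ j))
    (hCR : ∀ j < k, (f (u j) - f v) / (u j - v) =
      (f (x (j + 1)) - f (x j)) / (x (j + 1) - x j)) :
    ∑ j ∈ Finset.range k, (Real.tan ((γ (j + 1) - γ j) / 2) : ℂ) * (f (u j) - f v) = 0 := by
  have hrhombus : ∀ j < k, (Real.tan ((γ (j + 1) - γ j) / 2) : ℂ) * (f (u j) - f v) =
      -I * (f (x (j + 1)) - f (x j)) := by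
    intro j hj
    have hsin : sin (((γ (j + 1) : ℂ) - γ j) / 2) ≠ 0 := by
      exact_mod_cast (Real.sin_pos_of_pos_of_lt_pi (by linarith [hmono j hj])
        (by linarith [hgap j hj, Real.pi_pos])).ne'
    have hdiag : u j - v = exp (I * γ j) + exp (I * γ (j + 1)) := by rw [hu j hj]; ring
    have hside : x (j + 1) - x j = exp (I * γ (j + 1)) - exp (I * γ j) := by
      rw [hx (j + 1) hj, hx j hj.le]; ring
    have h := hCR j hj
    rw [hdiag, hside] at h
    push_cast
    exact tan_mul_eq_neg_I_mul_of_div_eq_div hsin h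
  have hclosed : x k = x 0 := by
    rw [hx k le_rfl, hx 0 (Nat.zero_le _), hper]
    push_cast
    rw [show I * ((γ 0 : ℂ) + 2 * Real.pi) = I * γ 0 + 2 * Real.pi * I by ring, exp_periodic]
  rw [sum_congr rfl fun j hj => hrhombus j (mem_range.mp hj), ← mul_sum,
    sum_range_sub (fun j => f (x j)), hclosed, sub_self, mul_zero]

/-- The restriction of a discrete holomorphic function to the primal vertices is discrete
harmonic: with rhombus side directions `e^{iγ_0}, …, e^{iγ_{k-1}}` around a vertex `v` in
strictly increasing cyclic order (`γ_k = γ_0 + 2π`, gaps in `(0, π)`), primal neighbors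
`u_j = v + e^{iγ_j} + e^{iγ_{j+1}}` and dual vertices `x_j = v + e^{iγ_j}`, if `f`
satisfies the discrete Cauchy-Riemann equation
`(f(u_j) - f(v))/(u_j - v) = (f(x_{j+1}) - f(x_j))/(x_{j+1} - x_j)` on every rhombus,
then `∑_j tan(θ_j)·(f(u_j) - f(v)) = 0` with `θ_j = (γ_{j+1}-γ_j)/2`. -/
theorem discrete_holomorphic_restriction_harmonic
    (k : ℕ) (hk : 0 < k) (γ : ℕ → ℝ) (v : ℂ) (u x : ℕ → ℂ) (f : ℂ → ℂ)
    (hmono : ∀ j < k, γ j < γ (j + 1))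
    (hgap : ∀ j < k, γ (j + 1) - γ j < Real.pi)
    (hper : γ k = γ 0 + 2 * Real.pi)
    (hu : ∀ j < k, u j = v + Complex.exp (Complex.I * γ j) +
      Complex.exp (Complex.I * γ (j + 1)))
    (hx : ∀ j ≤ k, x j = v + Complex.exp (Complex.I * γ j))
    (hCR : ∀ j < k, (f (u j) - f v) / (u j - v) =
      (f (x (j + 1)) - f (x j)) / (x (j + 1) - x j)) :
    ∑ j ∈ Finset.range k, (Real.tan ((γ (j + 1) - γ j) / 2) : ℂ) * (f (u j) - f v) = 0 :=
  discrete_holomorphic_restriction_harmonic_general k γ v u x f hmono hgap hper hu hx hCR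
end
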